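/- arXiv:1804.03913 — 8 statements merged into one kernel-verified Lean document; each statement's English description precedes it below -/
import Mathlib

section
/- Let X be a subshift in which periodic points are dense, and let f : X → X be a shift-commuting continuous map. If f is injective, then f is surjective. -/
/-!
A map `f` commuting with the shift sends points of period `n` to points of period `n`, and there
are only finitely many of these; so an injective `f` permutes them. Hence the image of `f`, which
is closed by compactness, contains every periodic point, and density of those gives surjectivity.
-/

open Function Set

theorem Function.Surjective.of_commute_of_dense_periodicPts {Y : Type*} [TopologicalSpace Y]
    [CompactSpace Y] [T2Space Y] {f g : Y → Y} (hcont : Continuous f) (hinj : Injective f)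
    (hcomm : Function.Commute f g) (hfin : ∀ n, 0 < n → (ptsOfPeriod g n).Finite)
    (hdense : Dense (periodicPts g)) : Surjective f := by
  have hperiodic : periodicPts g ⊆ range f := by
    rintro x ⟨n, hn, hx⟩
    have hbij : BijOn f (ptsOfPeriod g n) (ptsOfPeriod g n) :=
      ((hfin n hn).injOn_iff_bijOn_of_mapsTo (hcomm.mapsTo_ptsOfPeriod n)).mp hinj.injOn
    obtain ⟨y, -, rfl⟩ := hbij.surjOn hx
    exact mem_range_self y
  have hclosed : IsClosed (range f) := (isCompact_range hcont).isClosed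
  rw [← range_eq_univ, ← hclosed.closure_eq]
  exact (hdense.mono hperiodic).closure_eq

theorem Set.MapsTo.isPeriodicPt_restrict_iff {α : Type*} {s : Set α} {g : α → α}
    (h : MapsTo g s s) {n : ℕ} {x : s} :
    IsPeriodicPt (h.restrict g s s) n x ↔ IsPeriodicPt g n x := by
  simp only [IsPeriodicPt, IsFixedPt, Subtype.ext_iff, h.coe_iterate_restrict]

theorem finite_setOf_periodic_int {α : Type*} [Finite α] {n : ℕ} (hn : n ≠ 0) :
    {x : ℤ → α | Periodic x n}.Finite := by
  have : NeZero n := ⟨hn⟩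
  -- an `n`-periodic `x` factors through `ℤ → ZMod n`
  refine (finite_range fun y : ZMod n → α => y ∘ Int.cast).subset ?_
  intro x hx
  refine ⟨fun j => x j.val, funext fun i => ?_⟩
  change x ((i : ZMod n).val : ℤ) = x i
  rw [ZMod.val_intCast, Int.emod_def, mul_comm]
  exact Periodic.sub_int_mul_eq hx _

def shift {α : Type*} (x : ℤ → α) : ℤ → α := fun i => x (i + 1)

theorem shift_iterate_apply {α : Type*} (n : ℕ) (x : ℤ → α) (i : ℤ) :
    shift^[n] x i = x (i + n) := by
  induction n generalizing x with
  | zero => simp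
  | succ n ih => simp only [iterate_succ_apply, ih, shift, Nat.cast_succ, add_assoc]

theorem isPeriodicPt_shift_iff {α : Type*} {n : ℕ} {x : ℤ → α} :
    IsPeriodicPt shift n x ↔ Periodic x n := by
  simp only [IsPeriodicPt, IsFixedPt, funext_iff, shift_iterate_apply, Periodic]

/-- A subshift with dense periodic points: an injective cellular automaton on it is
surjective.  `X` is a closed shift-invariant subset of `ℤ → A` (product topology,
`A` a finite discrete alphabet), `f` is continuous on `X`, maps `X` into `X`, and
commutes with the shift `x ↦ (i ↦ x (i+1))`. -/
theorem stmt_2 {A : Type*} [Fintype A] [TopologicalSpace A] [DiscreteTopology A]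
    (X : Set (ℤ → A)) (hclosed : IsClosed X)
    (hinv : ∀ x ∈ X, (fun i => x (i + 1)) ∈ X)
    (hdense : ∀ x ∈ X,
      x ∈ closure {y | y ∈ X ∧ ∃ p : ℕ, 1 ≤ p ∧ ∀ i : ℤ, y (i + p) = y i})
    (f : (ℤ → A) → (ℤ → A))
    (hmaps : Set.MapsTo f X X) (hcont : ContinuousOn f X)
    (hcomm : ∀ x ∈ X, f (fun i => x (i + 1)) = fun i => f x (i + 1))
    (hinj : Set.InjOn f X) :
    Set.SurjOn f X X := by
  have hshift : MapsTo shift X X := hinv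
  have : CompactSpace X := isCompact_iff_compactSpace.mp hclosed.isCompact
  rw [← hmaps.restrict_surjective_iff]
  refine .of_commute_of_dense_periodicPts (g := hshift.restrict shift X X)
    (hcont.mapsToRestrict hmaps) (hmaps.restrict_inj.mpr hinj)
    (fun x => Subtype.ext (hcomm x x.2)) (fun n hn => ?_) ?_
  · have hval : ptsOfPeriod (hshift.restrict shift X X) n =
        Subtype.val ⁻¹' {x : ℤ → A | Periodic x n} := by
      ext x; exact hshift.isPeriodicPt_restrict_iff.trans isPeriodicPt_shift_iff
    rw [hval]
    exact (finite_setOf_periodic_int hn.ne').preimage Subtype.val_injective.injOn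
  · rw [Subtype.dense_iff]
    refine fun x hx => closure_mono ?_ (hdense x hx)
    rintro y ⟨hy, p, hp, hyp⟩
    refine ⟨⟨y, hy⟩, ⟨p, hp, ?_⟩, rfl⟩
    exact hshift.isPeriodicPt_restrict_iff.mpr (isPeriodicPt_shift_iff.mpr hyp)
end

section
/- Let X be a subshift in which injective cellular automata are surjective (e.g. a subshift with dense periodic points), and let f : X → X be a surjective cellular automaton. If f is Von Neumann regular in the monoid of cellular automata on X, then f is bijective. -/
/-- Let `X` be a subshift on which every injective cellular automaton is surjective.
If `f` is a surjective cellular automaton on `X` which is Von Neumann regular in the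
monoid of cellular automata on `X` (i.e. some cellular automaton `g` on `X`
satisfies `f ∘ g ∘ f = f` on `X`), then `f` is bijective on `X`. -/
theorem stmt_5 {A : Type*} [Fintype A] [TopologicalSpace A] [DiscreteTopology A]
    (X : Set (ℤ → A)) (hclosed : IsClosed X)
    (hinv : ∀ x ∈ X, (fun i => x (i + 1)) ∈ X)
    (hsurjunctive : ∀ h : (ℤ → A) → (ℤ → A),
      Set.MapsTo h X X → ContinuousOn h X →
      (∀ x ∈ X, h (fun i => x (i + 1)) = fun i => h x (i + 1)) →
      Set.InjOn h X → Set.SurjOn h X X)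
    (f : (ℤ → A) → (ℤ → A))
    (hmaps : Set.MapsTo f X X) (hcont : ContinuousOn f X)
    (hcomm : ∀ x ∈ X, f (fun i => x (i + 1)) = fun i => f x (i + 1))
    (hsurj : Set.SurjOn f X X)
    (hreg : ∃ g : (ℤ → A) → (ℤ → A),
      Set.MapsTo g X X ∧ ContinuousOn g X ∧
      (∀ x ∈ X, g (fun i => x (i + 1)) = fun i => g x (i + 1)) ∧
      ∀ x ∈ X, f (g (f x)) = f x) :
    Set.BijOn f X X := by
  obtain ⟨g, gmaps, gcont, gcomm, hfg⟩ := hreg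
  -- f ∘ g = id on X
  have hfgid : ∀ y ∈ X, f (g y) = y := by
    intro y hy
    obtain ⟨x, hx, rfl⟩ := hsurj hy
    exact hfg x hx
  -- g is injective on X
  have ginj : Set.InjOn g X := by
    intro y1 h1 y2 h2 h
    rw [← hfgid y1 h1, ← hfgid y2 h2, h]
  -- hence g is surjective on X
  have gsurj : Set.SurjOn g X X := hsurjunctive g gmaps gcont gcomm ginj
  -- f is injective on X
  have finj : Set.InjOn f X := by
    intro x1 h1 x2 h2 h
    obtain ⟨z1, hz1, rfl⟩ := gsurj h1
    obtain ⟨z2, hz2, rfl⟩ := gsurj h2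
    rw [hfgid z1 hz1, hfgid z2 hz2] at h
    rw [h]
  exact ⟨hmaps, finj, hsurj⟩
end

section
/- The XOR cellular automaton f on {0,1}^ℤ defined by f(x)_i = x_i + x_{i+1} mod 2 is surjective but not injective, and hence not Von Neumann regular in the monoid of cellular automata on {0,1}^ℤ. -/
/-!
Surjectivity: given `y`, solve `x (i + 1) = x i ^^ y i` from `x 0 = false` in both directions.
The two constant configurations have the same image, so `f` is not injective.

If `f ∘ g ∘ f = f` for a cellular automaton `g`, surjectivity of `f` makes `g` a right inverse
of `f`, so `g` is injective. An injective cellular automaton maps the finite set of points of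
period `n` injectively, hence bijectively, to itself; so its range, which is compact and thus
closed, contains the dense set of periodic points and `g` is surjective. Then `f` is a
left inverse of `g` too, hence injective: a contradiction.
-/

open Function Set Filter Topology

theorem Int.exists_forall_add_one_eq {α : Type*} (s : ℤ → α ≃ α) (a : α) :
    ∃ x : ℤ → α, ∀ i, x (i + 1) = s i (x i) := by
  refine ⟨fun z => Int.inductionOn' (motive := fun _ => α) z 0 a (fun k _ v => s k v)
    (fun k _ v => (s (k - 1)).symm v), fun i => ?_⟩
  rcases le_or_gt 0 i with hi | hi
  · exact Int.inductionOn'_add_one hi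
  · have h := Int.inductionOn'_sub_one (motive := fun _ => α) (z := i + 1) (b := 0) (zero := a)
      (succ := fun k _ v => s k v) (pred := fun k _ v => (s (k - 1)).symm v) (by omega)
    rw [add_sub_cancel_right] at h
    simp only [h, Equiv.apply_symm_apply]

namespace FullShift

variable {α : Type*}

def shift (x : ℤ → α) : ℤ → α := fun i => x (i + 1)

theorem shift_iterate_apply (n : ℕ) (x : ℤ → α) (i : ℤ) : shift^[n] x i = x (i + n) := by
  induction n generalizing x with
  | zero => simp
  | succ n ih =>
    rw [iterate_succ_apply, ih, shift]
    push_cast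
    ring_nf

theorem isPeriodicPt_shift_iff {n : ℕ} {x : ℤ → α} :
    IsPeriodicPt shift n x ↔ Periodic x n := by
  simp only [IsPeriodicPt, IsFixedPt, funext_iff, shift_iterate_apply, Periodic]

theorem finite_ptsOfPeriod_shift [Finite α] {n : ℕ} (hn : 0 < n) :
    (ptsOfPeriod (shift (α := α)) n).Finite := by
  have hp : (0 : ℤ) < n := by exact_mod_cast hn
  refine Set.Finite.of_finite_image (f := fun x (j : Ico (0 : ℤ) n) => x j) (Set.toFinite _) ?_
  intro x hx y hy hxy
  have hx' := isPeriodicPt_shift_iff.1 hx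
  have hy' := isPeriodicPt_shift_iff.1 hy
  funext i
  have hi : toIcoMod hp 0 i ∈ Ico (0 : ℤ) n := by
    simpa using toIcoMod_mem_Ico hp 0 i
  have key := congrFun hxy ⟨_, hi⟩
  simp only at key
  rwa [toIcoMod, hx'.sub_zsmul_eq, hy'.sub_zsmul_eq] at key

theorem dense_periodicPts_shift [TopologicalSpace α] : Dense (periodicPts (shift (α := α))) := by
  intro x
  have hp (n : ℕ) : (0 : ℤ) < (2 * n + 1 : ℕ) := by omega
  let y (n : ℕ) : ℤ → α := fun i => x (toIcoMod (hp n) (-n) i)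
  refine mem_closure_of_tendsto (f := y) (b := atTop) ?_ (Eventually.of_forall fun n => ?_)
  · refine tendsto_pi_nhds.2 fun i => tendsto_const_nhds.congr' ?_
    filter_upwards [eventually_ge_atTop i.natAbs] with n hn
    show x i = x (toIcoMod (hp n) (-n) i)
    rw [toIcoMod_eq_self (hp n) |>.2]
    constructor <;> push_cast <;> omega
  · exact ⟨2 * n + 1, by omega, isPeriodicPt_shift_iff.2 ((toIcoMod_periodic (hp n) _).comp x)⟩

theorem _root_.Function.Injective.surjective_of_commute_shift
    [Finite α] [TopologicalSpace α] [DiscreteTopology α] {g : (ℤ → α) → (ℤ → α)}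
    (hinj : Injective g) (hcont : Continuous g) (hcomm : Function.Commute g shift) :
    Surjective g := by
  have hper : periodicPts shift ⊆ range g := by
    rintro x ⟨n, hn, hx⟩
    have hmaps : MapsTo g (ptsOfPeriod shift n) (ptsOfPeriod shift n) :=
      fun z hz => IsPeriodicPt.map hz hcomm
    obtain ⟨z, -, rfl⟩ := ((finite_ptsOfPeriod_shift hn).injOn_iff_bijOn_of_mapsTo hmaps).1
      hinj.injOn |>.surjOn hx
    exact mem_range_self z
  rw [← range_eq_univ, ← (isCompact_range hcont).isClosed.closure_eq]
  exact (dense_periodicPts_shift.mono hper).closure_eq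

end FullShift

open FullShift in
/-- The XOR cellular automaton `f(x)_i = x_i + x_{i+1} mod 2` on the full shift
`{0,1}^ℤ` is surjective but not injective, and hence not Von Neumann regular in the
monoid of cellular automata (shift-commuting continuous self-maps) of `{0,1}^ℤ`. -/
theorem stmt_8
    (f : (ℤ → Bool) → (ℤ → Bool))
    (hf : ∀ x i, f x i = xor (x i) (x (i + 1))) :
    Function.Surjective f ∧ ¬ Function.Injective f ∧
    ¬ ∃ g : (ℤ → Bool) → (ℤ → Bool),
        Continuous g ∧
        (∀ x : ℤ → Bool, g (fun i => x (i + 1)) = fun i => g x (i + 1)) ∧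
        ∀ x, f (g (f x)) = f x := by
  have hsurj : Surjective f := fun y => by
    obtain ⟨x, hx⟩ := Int.exists_forall_add_one_eq
      (fun i => Involutive.toPerm (xor · (y i)) fun b => by simp) false
    exact ⟨x, funext fun i => by
      rw [hf, hx]
      exact Bool.bne_self_left ..⟩
  have hninj : ¬ Injective f := fun hinj => by
    simpa using congrFun (@hinj (fun _ => false) (fun _ => true) (funext fun i => by simp [hf])) 0
  refine ⟨hsurj, hninj, ?_⟩
  rintro ⟨g, hcont, hcomm, hfgf⟩
  have hfg : LeftInverse f g := fun y => by
    obtain ⟨x, rfl⟩ := hsurj y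
    exact hfgf x
  have hg : Surjective g := hfg.injective.surjective_of_commute_shift hcont hcomm
  exact hninj (hfg.rightInverse_of_surjective hg).injective
end

section
/- Let f be elementary cellular automaton rule 28, defined by f(x)_i = 1 iff x_{i-1}x_ix_{i+1} ∈ {010, 011, 100}. Then the image of f is the SFT with the single forbidden word 111, i.e. f({0,1}^ℤ) = {x ∈ {0,1}^ℤ : no i with x_i = x_{i+1} = x_{i+2} = 1}. -/
/-- "Carry" predicate: there is an isolated `1` in `y` at some `j < i`,
followed by all `0`s up to and including position `i`. -/
def ECACarry (y : ℤ → Bool) (i : ℤ) : Prop :=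
  ∃ j < i, y j = true ∧ y (j - 1) = false ∧ y (j + 1) = false ∧
    ∀ k, j < k → k ≤ i → y k = false

lemma ECACarry_self {y : ℤ → Bool} {i : ℤ} (h : ECACarry y i) : y i = false := by
  obtain ⟨j, hj, _, _, _, hall⟩ := h
  exact hall i hj le_rfl

lemma ECACarry_succ (y : ℤ → Bool) (i : ℤ) :
    ECACarry y (i + 1) ↔
      (y (i + 1) = false ∧ (ECACarry y i ∨
        (y i = true ∧ y (i - 1) = false ∧ y (i + 1) = false))) := by
  constructor
  · rintro ⟨j, hj, h1, h2, h3, hall⟩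
    rcases lt_or_eq_of_le (show j ≤ i by omega) with hji | rfl
    · exact ⟨hall (i+1) (by omega) le_rfl,
        Or.inl ⟨j, hji, h1, h2, h3, fun k hk1 hk2 => hall k hk1 (by omega)⟩⟩
    · exact ⟨h3, Or.inr ⟨h1, h2, h3⟩⟩
  · rintro ⟨hy, hc | ⟨h1, h2, h3⟩⟩
    · obtain ⟨j, hj, a1, a2, a3, hall⟩ := hc
      refine ⟨j, by omega, a1, a2, a3, fun k hk1 hk2 => ?_⟩
      rcases lt_or_eq_of_le hk2 with hk | rfl
      · exact hall k hk1 (by omega)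
      · exact hy
    · exact ⟨i, by omega, h1, h2, h3, fun k hk1 hk2 => by
        have : k = i + 1 := by omega
        subst this; exact hy⟩

open Classical in
/-- Explicit preimage under rule 28. -/
noncomputable def ECAPre (y : ℤ → Bool) : ℤ → Bool := fun i =>
  (y i && !y (i - 1)) || (!y (i + 1) && decide (ECACarry y i))

/-- ECA rule 28: `f(x)_i = 1` iff `x_{i-1} x_i x_{i+1} ∈ {010, 011, 100}`.
Its image is the SFT with single forbidden word `111`: the set of binary
biinfinite sequences containing no three consecutive `1`s. -/
theorem stmt_12
    (f : (ℤ → Bool) → (ℤ → Bool))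
    (hf : ∀ x i, f x i =
      (((!(x (i - 1))) && x i) || (x (i - 1) && !(x i) && !(x (i + 1))))) :
    Set.range f =
      {x : ℤ → Bool | ¬ ∃ i : ℤ, x i = true ∧ x (i + 1) = true ∧ x (i + 2) = true} := by
  classical
  ext y
  simp only [Set.mem_range, Set.mem_setOf_eq]
  constructor
  · rintro ⟨x, rfl⟩ ⟨i, h1, h2, h3⟩
    rw [hf] at h1 h2 h3
    rw [show (i:ℤ) + 1 - 1 = i by ring, show (i:ℤ) + 1 + 1 = i + 2 by ring] at h2
    rw [show (i:ℤ) + 2 - 1 = i + 1 by ring, show (i:ℤ) + 2 + 1 = i + 3 by ring] at h3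
    revert h1 h2 h3
    cases hx0 : x (i - 1) <;> cases hx1 : x i <;> cases hx2 : x (i+1) <;>
      cases hx3 : x (i+2) <;> cases hx4 : x (i+3) <;> simp
  · intro h
    push_neg at h
    refine ⟨ECAPre y, ?_⟩
    funext i
    rw [hf]
    have key : ∀ j : ℤ, ¬(y j = true ∧ y (j+1) = true ∧ y (j+2) = true) := by
      intro j hj
      exact absurd hj.2.2 (h j hj.1 hj.2.1)
    have k1 := key (i - 2)
    have k2 := key (i - 1)
    have k3 := key i
    rw [show (i:ℤ) - 2 + 1 = i - 1 by ring, show (i:ℤ) - 2 + 2 = i by ring] at k1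
    rw [show (i:ℤ) - 1 + 1 = i by ring, show (i:ℤ) - 1 + 2 = i + 1 by ring] at k2
    -- abbreviations
    have hC : decide (ECACarry y i)
        = (!y i && (decide (ECACarry y (i-1)) || (y (i-1) && !y (i-2) && !y i))) := by
      have := ECACarry_succ y (i - 1)
      rw [show (i:ℤ) - 1 + 1 = i by ring, show (i:ℤ) - 1 - 1 = i - 2 by ring] at this
      rw [decide_eq_decide.mpr this]
      · simp [Bool.decide_and, Bool.decide_or, Bool.and_assoc]
      · exact Classical.propDecidable _
    have hC1 : decide (ECACarry y (i+1))
        = (!y (i+1) && (decide (ECACarry y i) || (y i && !y (i-1) && !y (i+1)))) := by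
      have := ECACarry_succ y i
      rw [decide_eq_decide.mpr this]
      · simp [Bool.decide_and, Bool.decide_or, Bool.and_assoc]
      · exact Classical.propDecidable _
    have hCb : decide (ECACarry y (i-1)) = true → y (i-1) = false := by
      intro hc
      exact ECACarry_self (of_decide_eq_true hc)
    have e0 : ECAPre y (i - 1)
        = ((y (i-1) && !y (i-2)) || (!y i && decide (ECACarry y (i-1)))) := by
      rw [ECAPre, show (i:ℤ) - 1 - 1 = i - 2 by ring, show (i:ℤ) - 1 + 1 = i by ring]
    have e1 : ECAPre y i
        = ((y i && !y (i-1)) || (!y (i+1) && decide (ECACarry y i))) := rfl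
    have e2 : ECAPre y (i + 1)
        = ((y (i+1) && !y i) || (!y (i+2) && decide (ECACarry y (i+1)))) := by
      rw [ECAPre, show (i:ℤ) + 1 - 1 = i by ring, show (i:ℤ) + 1 + 1 = i + 2 by ring]
    rw [e0, e1, e2, hC1, hC]
    revert k1 k2 k3 hCb
    cases y (i-2) <;> cases y (i-1) <;> cases y i <;> cases y (i+1) <;> cases y (i+2) <;>
      cases hc : decide (ECACarry y (i-1)) <;> simp
end

section
/- Elementary cellular automaton rule 28 is not Von Neumann regular: writing f for ECA 28, f(0^ℤ) = f(1^ℤ) = 0^ℤ, the point x = ...000010000... (a single 1) lies in f({0,1}^ℤ) but has no f-preimage asymptotic at both ends to 0^ℤ, and the point x' = ...000110000... (the word 11 surrounded by 0s) lies in f({0,1}^ℤ) but has no f-preimage asymptotic at both ends to 1^ℤ; consequently no shift-commuting continuous g satisfies f ∘ g ∘ f = f. -/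
/-!
A continuous shift-commuting `g` sends every point asymptotic to `0^ℤ` at both ends to a point
asymptotic at both ends to the constant `g(0^ℤ)₀`, because the translates of such a point
converge to `0^ℤ`. If `f ∘ g ∘ f = f`, then `g x` is an `f`-preimage of `x = f(…000111…)` and
`g x'` one of `x' = f x`, both asymptotic to that same constant; rule 28 forbids the constant
`0` for `x` and the constant `1` for `x'`.
-/

open Filter Topology

theorem Int.eventually_cofinite_iff_exists_le_abs {P : ℤ → Prop} :
    (∀ᶠ i in cofinite, P i) ↔ ∃ N : ℤ, ∀ i : ℤ, N ≤ |i| → P i := by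
  rw [Int.cofinite_eq, ← comap_abs_atTop, eventually_comap, eventually_atTop]
  exact exists_congr fun N => ⟨fun h i hi => h _ hi i rfl, fun h _ hb i hi => h i (hi ▸ hb)⟩

theorem exists_greatest_ne_of_eventually_cofinite {α : Type*} {y : ℤ → α} {a : α}
    (hy : ∀ᶠ i in cofinite, y i = a) (hne : ∃ i, y i ≠ a) :
    ∃ m, y m ≠ a ∧ ∀ i, m < i → y i = a := by
  obtain ⟨m, hm, hmax⟩ := Set.exists_max_image _ id (eventually_cofinite.1 hy) hne
  exact ⟨m, hm, fun i hi => by_contra fun h => (hmax i h).not_gt hi⟩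

theorem exists_least_ne_of_eventually_cofinite {α : Type*} {y : ℤ → α} {a : α}
    (hy : ∀ᶠ i in cofinite, y i = a) (hne : ∃ i, y i ≠ a) :
    ∃ l, y l ≠ a ∧ ∀ i, i < l → y i = a := by
  obtain ⟨l, hl, hmin⟩ := Set.exists_min_image _ id (eventually_cofinite.1 hy) hne
  exact ⟨l, hl, fun i hi => by_contra fun h => (hmin i h).not_gt hi⟩

section ShiftCommuting

variable {α β : Type*} {g : (ℤ → α) → (ℤ → β)}

theorem map_translate_of_map_shift
    (hshift : ∀ z : ℤ → α, g (fun i => z (i + 1)) = fun i => g z (i + 1))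
    (z : ℤ → α) (n : ℤ) : g (fun i => z (i + n)) = fun i => g z (i + n) := by
  induction n using Int.induction_on generalizing z with
  | zero => simp
  | succ k ih =>
    have h := hshift fun i => z (i + k)
    have e : ∀ i : ℤ, i + (k + 1) = i + 1 + k := fun i => by ring
    simp only [ih] at h
    simpa only [e] using h
  | pred k ih =>
    have h := hshift fun i => z (i + (-k - 1))
    have e : ∀ i : ℤ, i + 1 + (-k - 1) = i + -k := fun i => by ring
    simp only [e, ih] at h
    funext i
    rw [← sub_add_cancel i 1, ← congrFun h (i - 1)]
    congr 1
    ring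

theorem eventually_cofinite_map_eq [TopologicalSpace α] [TopologicalSpace β] [DiscreteTopology β]
    (hg : Continuous g)
    (hshift : ∀ z : ℤ → α, g (fun i => z (i + 1)) = fun i => g z (i + 1))
    {p : ℤ → α} {a : α} (hp : ∀ᶠ i in cofinite, p i = a) :
    ∀ᶠ i in cofinite, g p i = g (fun _ => a) 0 := by
  have htranslate : Tendsto (fun n : ℤ => fun i => p (i + n)) cofinite (𝓝 fun _ => a) :=
    tendsto_pi_nhds.2 fun i =>
      tendsto_nhds_of_eventually_eq ((add_right_injective i).tendsto_cofinite.eventually hp)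
  have := tendsto_pi_nhds.1 ((hg.tendsto _).comp htranslate) 0
  rw [nhds_discrete, tendsto_pure] at this
  simpa [Function.comp_def, map_translate_of_map_shift hshift] using this

end ShiftCommuting

def eca28 (x : ℤ → Bool) (i : ℤ) : Bool :=
  ((!(x (i - 1))) && x i) || (x (i - 1) && !(x i) && !(x (i + 1)))

theorem eca28_const (b : Bool) : eca28 (fun _ => b) = fun _ => false := by
  cases b <;> rfl

theorem eca28_heaviside : eca28 (fun i => decide (0 ≤ i)) = fun i => decide (i = 0) := by
  funext i
  rcases lt_trichotomy i 0 with h | rfl | h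
  · simp [eca28, h.ne, show ¬ 0 ≤ i by omega]
    omega
  · rfl
  · simp [eca28, h.ne', h.le]
    omega

theorem eca28_single : eca28 (fun i => decide (i = 0)) = fun i => decide (i = 0 ∨ i = 1) := by
  funext i
  by_cases h : i = 0 ∨ i = 1
  · rcases h with rfl | rfl <;> rfl
  · simp [eca28, show i ≠ 0 by omega, show i ≠ 1 by omega, show i - 1 ≠ 0 by omega]

/-- The leftmost `1` of `y` is seen by `f` at its own position, the rightmost one
just to its right, so `f y` has two `1`s. -/
theorem eca28_ne_single {y : ℤ → Bool} (hy : ∀ᶠ i in cofinite, y i = false) :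
    eca28 y ≠ fun i => decide (i = 0) := by
  intro hfy
  have hne : ∃ i, y i ≠ false := by
    by_contra! h
    simpa [show y = fun _ => false from funext h, eca28_const] using congrFun hfy 0
  obtain ⟨l, hl, hlt⟩ := exists_least_ne_of_eventually_cofinite hy hne
  obtain ⟨m, hm, hgt⟩ := exists_greatest_ne_of_eventually_cofinite hy hne
  have hl0 : l = 0 := by
    simpa [eca28, hlt (l - 1) (by omega), hl] using congrFun hfy l
  have hm0 : m + 1 = 0 := by
    simpa [eca28, hm, hgt (m + 1) (by omega), hgt (m + 1 + 1) (by omega)] using congrFun hfy (m + 1)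
  have : y m = false := hlt m (by omega)
  exact hm this

theorem eca28_ne_double {y : ℤ → Bool} (hy : ∀ᶠ i in cofinite, y i = true) :
    eca28 y ≠ fun i => decide (i = 0 ∨ i = 1) := by
  intro hfy
  have hne : ∃ i, y i ≠ true := by
    by_contra! h
    simpa [show y = fun _ => true from funext h, eca28_const] using congrFun hfy 0
  obtain ⟨m, hym, hgt⟩ := exists_greatest_ne_of_eventually_cofinite hy hne
  rw [ne_eq, Bool.not_eq_true] at hym
  have hm : m + 1 = 0 ∨ m + 1 = 1 := by
    simpa [eca28, hym, hgt (m + 1) (by omega)] using congrFun hfy (m + 1)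
  rcases hm with hm | hm
  · simpa [eca28, hgt 0 (by omega), hgt 1 (by omega)] using congrFun hfy 1
  · obtain rfl : m = 0 := by omega
    simpa [eca28, hym, hgt 1 (by omega)] using congrFun hfy 0

/-- ECA rule 28 (`f(x)_i = 1` iff `x_{i-1} x_i x_{i+1} ∈ {010, 011, 100}`) is not
Von Neumann regular: `f(0^ℤ) = f(1^ℤ) = 0^ℤ`; the point `x` with a single `1`
lies in the image of `f` but has no `f`-preimage asymptotic at both ends to `0^ℤ`;
the point `x'` with the word `11` surrounded by `0`s lies in the image of `f` but
has no `f`-preimage asymptotic at both ends to `1^ℤ`; and consequently no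
shift-commuting continuous `g` satisfies `f ∘ g ∘ f = f`. -/
theorem stmt_13
    (f : (ℤ → Bool) → (ℤ → Bool))
    (hf : ∀ x i, f x i =
      (((!(x (i - 1))) && x i) || (x (i - 1) && !(x i) && !(x (i + 1)))))
    (x x' : ℤ → Bool)
    (hx : ∀ i : ℤ, x i = decide (i = 0))
    (hx' : ∀ i : ℤ, x' i = decide (i = 0 ∨ i = 1)) :
    f (fun _ => false) = (fun _ => false) ∧
    f (fun _ => true) = (fun _ => false) ∧
    x ∈ Set.range f ∧
    (¬ ∃ y : ℤ → Bool, f y = x ∧ ∃ N : ℤ, ∀ i : ℤ, N ≤ |i| → y i = false) ∧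
    x' ∈ Set.range f ∧
    (¬ ∃ y : ℤ → Bool, f y = x' ∧ ∃ N : ℤ, ∀ i : ℤ, N ≤ |i| → y i = true) ∧
    ¬ ∃ g : (ℤ → Bool) → (ℤ → Bool),
        Continuous g ∧
        (∀ z : ℤ → Bool, g (fun i => z (i + 1)) = fun i => g z (i + 1)) ∧
        ∀ z, f (g (f z)) = f z := by
  obtain rfl : f = eca28 := funext fun y => funext (hf y)
  obtain rfl : x = _ := funext hx
  obtain rfl : x' = _ := funext hx'
  simp only [← Int.eventually_cofinite_iff_exists_le_abs]
  have hsingle : ¬ ∃ y, eca28 y = _ ∧ ∀ᶠ i in cofinite, y i = false :=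
    fun ⟨y, hfy, hy⟩ => eca28_ne_single hy hfy
  have hdouble : ¬ ∃ y, eca28 y = _ ∧ ∀ᶠ i in cofinite, y i = true :=
    fun ⟨y, hfy, hy⟩ => eca28_ne_double hy hfy
  refine ⟨eca28_const _, eca28_const _, ⟨_, eca28_heaviside⟩, hsingle, ⟨_, eca28_single⟩,
    hdouble, ?_⟩
  rintro ⟨g, hg, hshift, hinv⟩
  have hasymp {p : ℤ → Bool} (hp : ∀ᶠ i in cofinite, p i = false) :
      ∀ᶠ i in cofinite, g p i = g (fun _ => false) 0 :=
    eventually_cofinite_map_eq hg hshift hp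
  cases hb : g (fun _ => false) 0
  · exact hsingle ⟨g _, eca28_heaviside ▸ hinv _,
      hb ▸ hasymp ((eventually_cofinite_ne 0).mono fun i hi => by simp [hi])⟩
  · exact hdouble ⟨g _, eca28_single ▸ hinv _,
      hb ▸ hasymp (((eventually_cofinite_ne 0).and (eventually_cofinite_ne 1)).mono
        fun i hi => by simp [hi])⟩
end

section
/- Let f be elementary cellular automaton rule 6, f(x)_i = 1 iff x_{i-1}x_ix_{i+1} ∈ {001, 010}. Then f((1100)^ℤ) = (0001)^ℤ and (0001)^ℤ has no other f-preimage of period 4; also f((00001)^ℤ) = (00011)^ℤ and (00011)^ℤ has no other f-preimage of period 5. Consequently f has no weak inverse cellular automaton of radius 2. -/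
/-!
A configuration of period `n` is a word indexed by `ZMod n`, on which rule 6 acts cyclically, so the
two preimage statements are finite checks over the `2⁴` and `2⁵` cyclic words. A radius-2 automaton
`g` preserves periods, so a weak inverse must send `(0001)^ℤ` to its unique 4-periodic preimage
`(1100)^ℤ` and `(00011)^ℤ` to `(00001)^ℤ`. But `(0001)^ℤ` around position `1` and `(00011)^ℤ` around
position `6` both read `10001`, while `(1100)^ℤ` is `1` at position `1` and `(00001)^ℤ` is `0` at
position `6`.
-/

open Function

variable {α β : Type*}

def eca (r : α → α → α → β) (x : ℤ → α) (i : ℤ) : β :=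
  r (x (i - 1)) (x i) (x (i + 1))

def cyclicEca (r : α → α → α → β) (n : ℕ) (w : ZMod n → α) (k : ZMod n) : β :=
  r (w (k - 1)) (w k) (w (k + 1))

def rule6 (a b c : Bool) : Bool :=
  !a && xor b c

theorem eca_comp_intCast (r : α → α → α → β) (n : ℕ) (w : ZMod n → α) :
    eca r (w ∘ Int.cast) = cyclicEca r n w ∘ Int.cast := by
  funext i
  simp [eca, cyclicEca]

theorem periodic_comp_intCast (n : ℕ) (w : ZMod n → α) : Periodic (w ∘ Int.cast) n := by
  intro i
  simp

theorem Function.Periodic.apply_emod {y : ℤ → α} {n : ℤ} (h : Periodic y n) (i : ℤ) :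
    y i = y (i % n) := by
  rw [Int.emod_def, mul_comm]
  exact (h.sub_int_mul_eq (i / n)).symm

theorem eq_comp_intCast_of_apply_emod {n : ℕ} [NeZero n] {y : ℤ → α} {w : ZMod n → α} (P : ℤ → α)
    (h : ∀ i, y i = P (i % n)) (hw : ∀ k : ZMod n, P k.val = w k) : y = w ∘ Int.cast := by
  funext i
  rw [comp_apply, ← hw, ZMod.val_intCast, h]

theorem Function.Periodic.eq_comp_intCast {n : ℕ} [NeZero n] {y : ℤ → α} (h : Periodic y n) :
    y = (fun k : ZMod n => y k.val) ∘ Int.cast :=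
  eq_comp_intCast_of_apply_emod y h.apply_emod fun _ => rfl

theorem eca_comp_intCast_eq_and_unique {r : α → α → α → β} {n : ℕ} [NeZero n] {u : ZMod n → α}
    {v : ZMod n → β} (huv : ∀ w, cyclicEca r n w = v ↔ w = u) :
    eca r (u ∘ Int.cast) = v ∘ Int.cast ∧
      ∀ y : ℤ → α, Periodic y n → eca r y = v ∘ Int.cast → y = u ∘ Int.cast := by
  refine ⟨by rw [eca_comp_intCast, (huv u).2 rfl], fun y hy h => ?_⟩
  rw [hy.eq_comp_intCast, eca_comp_intCast] at h
  rw [hy.eq_comp_intCast, (huv _).1 (ZMod.intCast_surjective.injective_comp_right h)]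

theorem rule6_cyclic_preimage_four (w : ZMod 4 → Bool) :
    cyclicEca rule6 4 w = (fun k => decide (k = 3)) ↔ w = fun k => decide (k = 0 ∨ k = 1) := by
  revert w
  decide

theorem rule6_cyclic_preimage_five (w : ZMod 5 → Bool) :
    cyclicEca rule6 5 w = (fun k => decide (k = 3 ∨ k = 4)) ↔ w = fun k => decide (k = 4) := by
  revert w
  decide

section LocalRule

variable {m : ℕ} {g : (ℤ → α) → ℤ → β} {G : (Fin m → α) → β} {r : ℤ}

theorem apply_eq_of_local_rule (hG : ∀ x i, g x i = G (fun k => x (i - r + k))) {x x' : ℤ → α}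
    {i j : ℤ} (h : ∀ k : Fin m, x (i - r + k) = x' (j - r + k)) : g x i = g x' j := by
  rw [hG, hG]
  exact congrArg G (funext h)

theorem periodic_of_local_rule (hG : ∀ x i, g x i = G (fun k => x (i - r + k))) {x : ℤ → α}
    {n : ℤ} (hx : Periodic x n) : Periodic (g x) n := fun i =>
  apply_eq_of_local_rule hG fun k => by rw [show i + n - r + k = i - r + k + n by ring, hx]

end LocalRule

theorem apply_eq_of_unique_preimage {X Y : Type*} {f : X → Y} {g : Y → X}
    {P : X → Prop} {Q : Y → Prop} (hfg : ∀ x, f (g (f x)) = f x)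
    (hg : ∀ y, Q y → P (g y)) {p : X} {q : Y} (hp : f p = q) (hq : Q q)
    (huniq : ∀ y, P y → f y = q → y = p) : g q = p :=
  huniq _ (hg q hq) (by rw [← hp, hfg])

/-- ECA rule 6: `f(x)_i = 1` iff `x_{i-1} x_i x_{i+1} ∈ {001, 010}`.  Then
`f((1100)^ℤ) = (0001)^ℤ` and `(0001)^ℤ` has no other `f`-preimage of period 4;
`f((00001)^ℤ) = (00011)^ℤ` and `(00011)^ℤ` has no other `f`-preimage of period 5.
Consequently `f` has no weak inverse cellular automaton of radius 2. -/
theorem stmt_14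
    (f : (ℤ → Bool) → (ℤ → Bool))
    (hf : ∀ x i, f x i = (!(x (i - 1)) && xor (x i) (x (i + 1))))
    (p4 q4 p5 q5 : ℤ → Bool)
    (hp4 : ∀ i : ℤ, p4 i = decide (i % 4 = 0 ∨ i % 4 = 1))
    (hq4 : ∀ i : ℤ, q4 i = decide (i % 4 = 3))
    (hp5 : ∀ i : ℤ, p5 i = decide (i % 5 = 4))
    (hq5 : ∀ i : ℤ, q5 i = decide (i % 5 = 3 ∨ i % 5 = 4)) :
    f p4 = q4 ∧
    (∀ y : ℤ → Bool, (∀ i : ℤ, y (i + 4) = y i) → f y = q4 → y = p4) ∧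
    f p5 = q5 ∧
    (∀ y : ℤ → Bool, (∀ i : ℤ, y (i + 5) = y i) → f y = q5 → y = p5) ∧
    ¬ ∃ g : (ℤ → Bool) → (ℤ → Bool),
        (∃ G : (Fin 5 → Bool) → Bool,
          ∀ (x : ℤ → Bool) (i : ℤ), g x i = G (fun k => x (i - 2 + (k : ℤ)))) ∧
        ∀ x, f (g (f x)) = f x := by
  replace hf : f = eca rule6 := funext fun x => funext (hf x)
  replace hp4 : p4 = (fun k : ZMod 4 => decide (k = 0 ∨ k = 1)) ∘ Int.cast :=
    eq_comp_intCast_of_apply_emod (fun j => decide (j = 0 ∨ j = 1)) hp4 (by decide)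
  replace hq4 : q4 = (fun k : ZMod 4 => decide (k = 3)) ∘ Int.cast :=
    eq_comp_intCast_of_apply_emod (fun j => decide (j = 3)) hq4 (by decide)
  replace hp5 : p5 = (fun k : ZMod 5 => decide (k = 4)) ∘ Int.cast :=
    eq_comp_intCast_of_apply_emod (fun j => decide (j = 4)) hp5 (by decide)
  replace hq5 : q5 = (fun k : ZMod 5 => decide (k = 3 ∨ k = 4)) ∘ Int.cast :=
    eq_comp_intCast_of_apply_emod (fun j => decide (j = 3 ∨ j = 4)) hq5 (by decide)
  obtain ⟨fp4, uniq4⟩ : f p4 = q4 ∧ ∀ y : ℤ → Bool, Periodic y 4 → f y = q4 → y = p4 := by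
    rw [hf, hp4, hq4]
    exact eca_comp_intCast_eq_and_unique rule6_cyclic_preimage_four
  obtain ⟨fp5, uniq5⟩ : f p5 = q5 ∧ ∀ y : ℤ → Bool, Periodic y 5 → f y = q5 → y = p5 := by
    rw [hf, hp5, hq5]
    exact eca_comp_intCast_eq_and_unique rule6_cyclic_preimage_five
  refine ⟨fp4, uniq4, fp5, uniq5, ?_⟩
  rintro ⟨g, ⟨G, hG⟩, hfg⟩
  have gq4 : g q4 = p4 := apply_eq_of_unique_preimage hfg
    (fun _ => periodic_of_local_rule hG) fp4 (hq4 ▸ periodic_comp_intCast 4 _) uniq4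
  have gq5 : g q5 = p5 := apply_eq_of_unique_preimage hfg
    (fun _ => periodic_of_local_rule hG) fp5 (hq5 ▸ periodic_comp_intCast 5 _) uniq5
  have window : g q4 1 = g q5 6 := apply_eq_of_local_rule hG (by rw [hq4, hq5]; decide)
  rw [gq4, gq5, hp4, hp5] at window
  exact absurd window (by decide)
end

section
/- Elementary cellular automaton rule 7 is Von Neumann regular: letting f(x)_i = 1 iff x_{i-1}x_ix_{i+1} ∈ {000, 001, 010}, the radius-2 cellular automaton g defined by g(x)_i = 1 iff (x_i = 0 and x_{i+1} = 0) or (x_{i+1} = 0 and x_{i+2} = 1), satisfies f ∘ g ∘ f = f. -/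
/-- ECA rule 7 is Von Neumann regular: with
`f(x)_i = 1` iff `x_{i-1} x_i x_{i+1} ∈ {000, 001, 010}` and the radius-2 rule
`g(x)_i = 1` iff (`x_i = 0` and `x_{i+1} = 0`) or (`x_{i+1} = 0` and `x_{i+2} = 1`),
we have `f ∘ g ∘ f = f`. -/
theorem stmt_15
    (f g : (ℤ → Bool) → (ℤ → Bool))
    (hf : ∀ x i, f x i = (!(x (i - 1)) && !(x i && x (i + 1))))
    (hg : ∀ x i, g x i =
      ((!(x i) && !(x (i + 1))) || (!(x (i + 1)) && x (i + 2)))) :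
    ∀ x, f (g (f x)) = f x := by
  intro x
  funext i
  simp only [hf, hg]
  ring_nf
  generalize x (-2 + i) = a, x (-1 + i) = b, x i = c, x (1 + i) = d, x (2 + i) = e, x (3 + i) = p, x (4 + i) = q
  revert a b c d e p q
  decide
end

section
/- Let f be elementary cellular automaton rule 23, f(x)_i = 1 iff x_{i-1}x_ix_{i+1} ∈ {000, 001, 010, 100}. The radius-2 cellular automaton g whose local rule on the window x_{i-2}...x_{i+2} is given by the following first-matching-rule list: output 1 if x_{i-2}=1 and x_{i-1}=0; output 0 if x_i=1 and x_{i+1}=1; output 0 if x_{i-1}=1 and x_{i+1}=1; output 1 if x_{i-1}=0 and x_i=1; output 0 if x_{i+1}=1 and x_{i+2}=0; output 0 if x_i=1 and x_{i+2}=0; output 1 if x_{i-2}=1; output 0 if x_{i-1}=1; otherwise output 1; satisfies f ∘ g ∘ f = f. Hence ECA 23 is Von Neumann regular. -/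
/-- ECA rule 23 is Von Neumann regular: with
`f(x)_i = 1` iff `x_{i-1} x_i x_{i+1} ∈ {000, 001, 010, 100}` and `g` the radius-2
cellular automaton whose local rule on the window `x_{i-2} … x_{i+2}` is the
first-matching-rule list
(output 1 if `x_{i-2}=1 ∧ x_{i-1}=0`; output 0 if `x_i=1 ∧ x_{i+1}=1`;
output 0 if `x_{i-1}=1 ∧ x_{i+1}=1`; output 1 if `x_{i-1}=0 ∧ x_i=1`;
output 0 if `x_{i+1}=1 ∧ x_{i+2}=0`; output 0 if `x_i=1 ∧ x_{i+2}=0`;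
output 1 if `x_{i-2}=1`; output 0 if `x_{i-1}=1`; otherwise output 1),
we have `f ∘ g ∘ f = f`. -/
theorem stmt_19
    (f g : (ℤ → Bool) → (ℤ → Bool))
    (hf : ∀ x i, f x i =
      ((!(x (i - 1)) && !(x i && x (i + 1))) ||
       (x (i - 1) && !(x i) && !(x (i + 1)))))
    (hg : ∀ x i, g x i =
      (if x (i - 2) && !(x (i - 1)) then true
       else if x i && x (i + 1) then false
       else if x (i - 1) && x (i + 1) then false
       else if !(x (i - 1)) && x i then true
       else if x (i + 1) && !(x (i + 2)) then false
       else if x i && !(x (i + 2)) then false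
       else if x (i - 2) then true
       else if x (i - 1) then false
       else true)) :
    ∀ x, f (g (f x)) = f x := by
  intro x
  funext i
  simp only [hf, hg]
  ring_nf
  generalize x (-4 + i) = a0
  generalize x (-3 + i) = a1
  generalize x (-2 + i) = a2
  generalize x (-1 + i) = a3
  generalize x i = a4
  generalize x (1 + i) = a5
  generalize x (2 + i) = a6
  generalize x (3 + i) = a7
  generalize x (4 + i) = a8
  revert a0 a1 a2 a3 a4 a5 a6 a7 a8
  decide
end
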